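/- arXiv:0704.2744 — 5 statements merged into one kernel-verified Lean document; each statement's English description precedes it below -/
import Mathlib

section
/- Let M be a left C[x]⟨∂_x⟩-module and 𝓜 = M ⊗_C C[ξ] as above. The C-linear map M → coker(∂_x − ξ : 𝓜 → 𝓜), m ↦ [m ⊗ 1], is a bijection. -/
open TensorProduct Polynomial

/-!
Evaluation `m ⊗ p ↦ p(∂ₓ) m` kills the image of `∂ₓ - ξ`, so it descends to the cokernel and is
a left inverse of `m ↦ [m ⊗ 1]`. Conversely, modulo the image, multiplying by `ξ` is the same as
applying `∂ₓ`, so `[m ⊗ p] = [p(∂ₓ) m ⊗ 1]` and every class comes from `M`.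
-/

namespace Module.End

variable {R M : Type*} [CommRing R] [AddCommGroup M] [Module R M] (f : Module.End R M)

noncomputable def subX : M ⊗[R] R[X] →ₗ[R] M ⊗[R] R[X] :=
  TensorProduct.map f LinearMap.id - TensorProduct.map LinearMap.id (LinearMap.mulLeft R X)

noncomputable def evalTensor : M ⊗[R] R[X] →ₗ[R] M :=
  TensorProduct.lift (aeval f).toLinearMap.flip

@[simp]
lemma subX_tmul (m : M) (p : R[X]) : f.subX (m ⊗ₜ p) = f m ⊗ₜ p - m ⊗ₜ (X * p) := by
  simp [subX]

@[simp]
lemma evalTensor_tmul (m : M) (p : R[X]) : f.evalTensor (m ⊗ₜ p) = aeval f p m := rfl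

lemma aeval_X_mul_apply (p : R[X]) (m : M) : aeval f (X * p) m = aeval f p (f m) := by
  rw [mul_comm, map_mul, aeval_X, Module.End.mul_apply]

lemma evalTensor_comp_subX : f.evalTensor ∘ₗ f.subX = 0 := by
  refine TensorProduct.ext' fun m p => ?_
  rw [LinearMap.comp_apply, subX_tmul, map_sub, evalTensor_tmul, evalTensor_tmul,
    aeval_X_mul_apply, sub_self, LinearMap.zero_apply]

lemma range_subX_le_ker_evalTensor : LinearMap.range f.subX ≤ LinearMap.ker f.evalTensor :=
  LinearMap.range_le_ker_iff.mpr f.evalTensor_comp_subX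

lemma mkQ_subX_tmul_X_mul (m : M) (p : R[X]) :
    (LinearMap.range f.subX).mkQ (m ⊗ₜ (X * p)) = (LinearMap.range f.subX).mkQ (f m ⊗ₜ p) := by
  rw [Submodule.mkQ_apply, Submodule.mkQ_apply, eq_comm, Submodule.Quotient.eq]
  exact ⟨m ⊗ₜ p, f.subX_tmul m p⟩

lemma mkQ_tmul_eq_mkQ_aeval_tmul_one (p : R[X]) (m : M) :
    (LinearMap.range f.subX).mkQ (m ⊗ₜ p) = (LinearMap.range f.subX).mkQ (aeval f p m ⊗ₜ 1) := by
  induction p using Polynomial.induction_on generalizing m with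
  | C a =>
    rw [aeval_C, Module.algebraMap_end_apply, smul_tmul, smul_eq_C_mul, mul_one]
  | add p q hp hq =>
    rw [tmul_add, map_add, hp, hq, ← map_add, ← add_tmul, map_add, LinearMap.add_apply]
  | monomial n a ih =>
    rw [pow_succ', mul_left_comm, mkQ_subX_tmul_X_mul, ih, aeval_X_mul_apply]

noncomputable def toCokerSubX : M →ₗ[R] M ⊗[R] R[X] ⧸ LinearMap.range f.subX :=
  (LinearMap.range f.subX).mkQ ∘ₗ (TensorProduct.mk R M R[X]).flip 1

lemma toCokerSubX_bijective : Function.Bijective f.toCokerSubX := by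
  let g := (LinearMap.range f.subX).liftQ f.evalTensor f.range_subX_le_ker_evalTensor
  refine Function.bijective_iff_has_inverse.mpr ⟨g, fun m => by simp [g, toCokerSubX], ?_⟩
  suffices f.toCokerSubX ∘ₗ g = LinearMap.id from LinearMap.congr_fun this
  refine Submodule.linearMap_qext _ (TensorProduct.ext' fun m p => ?_)
  exact (f.mkQ_tmul_eq_mkQ_aeval_tmul_one p m).symm

end Module.End

theorem stmt_4_general {M : Type*} [AddCommGroup M] [Module ℂ M]
    (Dop : M →ₗ[ℂ] M) :
    Function.Bijective
      ((LinearMap.range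
          (TensorProduct.map Dop (LinearMap.id : Polynomial ℂ →ₗ[ℂ] Polynomial ℂ)
            - TensorProduct.map (LinearMap.id : M →ₗ[ℂ] M)
                (LinearMap.mulLeft ℂ (Polynomial.X : Polynomial ℂ)))).mkQ
        ∘ₗ ((TensorProduct.mk ℂ M (Polynomial ℂ)).flip 1)) :=
  Module.End.toCokerSubX_bijective Dop

/-- Let `M` be a left ℂ[x]⟨∂ₓ⟩-module, given by the actions `Xop` of `x` and
`Dop` of `∂ₓ` with `[Dop, Xop] = 1`, and let `𝓜 = M ⊗_ℂ ℂ[ξ]`.  The ℂ-linear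
map `M → coker(∂ₓ - ξ : 𝓜 → 𝓜)`, `m ↦ [m ⊗ 1]`, is a bijection. -/
theorem stmt_4 {M : Type*} [AddCommGroup M] [Module ℂ M]
    (Xop Dop : M →ₗ[ℂ] M) (hrel : Dop ∘ₗ Xop - Xop ∘ₗ Dop = LinearMap.id) :
    Function.Bijective
      ((LinearMap.range
          (TensorProduct.map Dop (LinearMap.id : Polynomial ℂ →ₗ[ℂ] Polynomial ℂ)
            - TensorProduct.map (LinearMap.id : M →ₗ[ℂ] M)
                (LinearMap.mulLeft ℂ (Polynomial.X : Polynomial ℂ)))).mkQ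
        ∘ₗ ((TensorProduct.mk ℂ M (Polynomial ℂ)).flip 1)) :=
  stmt_4_general Dop
end

section
/- Let M be a left C[x]⟨∂_x⟩-module and 𝓜 = M ⊗_C C[ξ]. On the cokernel of ∂_x − ξ : 𝓜 → 𝓜, the operator ∂_ξ − x descends to a well-defined endomorphism, and under the bijection M ≅ coker(∂_x − ξ) (m ↦ [m⊗1]) this endomorphism corresponds to the action of −x on M, while the action of ξ on the cokernel corresponds to the action of ∂_x on M. -/
/-!
Since `[∂ₓ, x] = 1` and `[∂_ξ, ξ] = 1`, and operators acting on different tensor factors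
commute, the two unit commutators cancel in `[∂_ξ - x, ∂ₓ - ξ]`; so `∂_ξ - x` commutes with
`∂ₓ - ξ` and preserves its range. On `m ⊗ 1` the derivative `∂_ξ` vanishes, and `ξ` agrees with
`∂ₓ` modulo the range of `∂ₓ - ξ` by the very definition of that operator.
-/

open TensorProduct

theorem Commute.sub_sub_of_sub_mul_eq_one {A : Type*} [Ring A] {a b c d : A}
    (hac : Commute a c) (hbd : Commute b d) (had : a * d - d * a = 1) (hcb : c * b - b * c = 1) :
    Commute (a - b) (c - d) := by
  rw [Commute, SemiconjBy, ← sub_eq_zero]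
  calc (a - b) * (c - d) - (c - d) * (a - b)
      = (a * c - c * a) + (b * d - d * b) - (a * d - d * a) + (c * b - b * c) := by noncomm_ring
    _ = 0 := by rw [hac.eq, hbd.eq, had, hcb]; abel

open Polynomial in
theorem Polynomial.derivative_mul_mulLeft_X_sub {R : Type*} [CommRing R] :
    (derivative : Module.End R R[X]) * LinearMap.mulLeft R X
      - LinearMap.mulLeft R X * derivative = 1 := by
  refine LinearMap.ext fun p => ?_
  simp [derivative_mul]

namespace TensorProduct

variable {R M N : Type*} [CommRing R] [AddCommGroup M] [Module R M] [AddCommGroup N] [Module R N]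

theorem commute_map_id_map (f : Module.End R M) (g : Module.End R N) :
    Commute (map f LinearMap.id) (map LinearMap.id g) := by
  ext m n
  simp

theorem map_mul_id_sub (f g : Module.End R M) :
    map f (LinearMap.id : Module.End R N) * map g LinearMap.id
      - map g LinearMap.id * map f LinearMap.id = map (f * g - g * f) LinearMap.id := by
  ext m n
  simp [sub_tmul]

theorem map_id_mul_sub (f g : Module.End R N) :
    map (LinearMap.id : Module.End R M) f * map LinearMap.id g
      - map LinearMap.id g * map LinearMap.id f = map LinearMap.id (f * g - g * f) := by
  ext m n
  simp [tmul_sub]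

theorem commute_map_sub_map {A B : Module.End R M} {C E : Module.End R N}
    (hAB : A * B - B * A = 1) (hCE : C * E - E * C = 1) :
    Commute (map A LinearMap.id - map LinearMap.id E) (map LinearMap.id C - map B LinearMap.id) :=
  (commute_map_id_map A C).sub_sub_of_sub_mul_eq_one (commute_map_id_map B E).symm
    (by rw [map_mul_id_sub, hAB]; exact map_id) (by rw [map_id_mul_sub, hCE]; exact map_id)

end TensorProduct

theorem LinearMap.apply_mem_range_of_commute {R M : Type*} [Semiring R] [AddCommMonoid M]
    [Module R M] {f g : Module.End R M} (h : Commute f g) {v : M} (hv : v ∈ range g) :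
    f v ∈ range g := by
  obtain ⟨u, rfl⟩ := hv
  exact ⟨f u, congr($(h.eq) u).symm⟩

/-- Let `M` be a left ℂ[x]⟨∂ₓ⟩-module (actions `Xop` of `x`, `Dop` of `∂ₓ`,
`[Dop, Xop] = 1`) and `𝓜 = M ⊗_ℂ ℂ[ξ]`.  On `coker(∂ₓ - ξ : 𝓜 → 𝓜)`, the
operator `∂_ξ - x` descends to a well-defined endomorphism; under the bijection
`M ≅ coker(∂ₓ - ξ)`, `m ↦ [m ⊗ 1]`, this endomorphism corresponds to the action
of `-x` on `M`, while the action of `ξ` on the cokernel corresponds to the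
action of `∂ₓ` on `M`. -/
theorem stmt_5 {M : Type*} [AddCommGroup M] [Module ℂ M]
    (Xop Dop : M →ₗ[ℂ] M) (hrel : Dop ∘ₗ Xop - Xop ∘ₗ Dop = LinearMap.id) :
    -- the operator ∂ₓ - ξ on 𝓜
    ∀ L Dxi Xi : M ⊗[ℂ] Polynomial ℂ →ₗ[ℂ] M ⊗[ℂ] Polynomial ℂ,
    L = TensorProduct.map Dop (LinearMap.id : Polynomial ℂ →ₗ[ℂ] Polynomial ℂ)
          - TensorProduct.map (LinearMap.id : M →ₗ[ℂ] M)
              (LinearMap.mulLeft ℂ (Polynomial.X : Polynomial ℂ)) →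
    -- the operator ∂_ξ - x on 𝓜
    Dxi = TensorProduct.map (LinearMap.id : M →ₗ[ℂ] M)
            (Polynomial.derivative : Polynomial ℂ →ₗ[ℂ] Polynomial ℂ)
          - TensorProduct.map Xop (LinearMap.id : Polynomial ℂ →ₗ[ℂ] Polynomial ℂ) →
    -- the action of ξ on 𝓜
    Xi = TensorProduct.map (LinearMap.id : M →ₗ[ℂ] M)
          (LinearMap.mulLeft ℂ (Polynomial.X : Polynomial ℂ)) →
    -- ∂_ξ - x descends to the cokernel of L
    (∀ v ∈ LinearMap.range L, Dxi v ∈ LinearMap.range L) ∧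
    -- on the cokernel, ∂_ξ - x acts as -x does on M
    (∀ m : M, (LinearMap.range L).mkQ (Dxi (m ⊗ₜ[ℂ] 1))
        = (LinearMap.range L).mkQ ((-(Xop m)) ⊗ₜ[ℂ] 1)) ∧
    -- on the cokernel, ξ acts as ∂ₓ does on M
    (∀ m : M, (LinearMap.range L).mkQ (Xi (m ⊗ₜ[ℂ] 1))
        = (LinearMap.range L).mkQ ((Dop m) ⊗ₜ[ℂ] 1)) := by
  intro L Dxi Xi hL hDxi hXi
  have hcomm : Commute Dxi L := by
    rw [hL, hDxi]
    exact (commute_map_sub_map hrel Polynomial.derivative_mul_mulLeft_X_sub).symm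
  have hXi_eq : Xi = map Dop LinearMap.id - L := by rw [hL, hXi, sub_sub_cancel]
  refine ⟨fun v hv => LinearMap.apply_mem_range_of_commute hcomm hv, fun m => ?_, fun m => ?_⟩
  · simp [hDxi, neg_tmul]
  · have hL_zero : (LinearMap.range L).mkQ (L (m ⊗ₜ 1)) = 0 :=
      (Submodule.Quotient.mk_eq_zero _).2 (LinearMap.mem_range_self L _)
    rw [hXi_eq, LinearMap.sub_apply, map_sub, hL_zero, sub_zero, map_tmul, LinearMap.id_apply]
end

section
/- Let (C•) be a two-term complex of C-modules E →^f F and suppose given an exhaustive increasing filtration E = F_0 ⊆ F_1 ⊆ F_2 ⊆ ⋯ of a module M with f mapping F_m into F_{m+1}, such that for all m ≥ 1 the induced map F_m/F_{m-1} → F_{m+1}/F_m is an isomorphism. Then the inclusion of complexes (F_0 → F_1) ↪ (M → M) (with differential f on both) is a quasi-isomorphism; in particular it induces isomorphisms on kernels and cokernels: ker(f : F_0 → F_1) ≅ ker(f : M → M) and coker(f : F_0 → F_1) ≅ coker(f : M → M). -/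
/-!
Comparing graded pieces: injectivity of `F m / F (m-1) → F (m+1) / F m` lets an element whose
image under `f` lies low in the filtration descend step by step to that level, which gives the
kernel and image statements; surjectivity lets one push any element of `F (m+1)` down to `F m`
modulo the image of `f`, so `F 1 + im f` is everything, which gives the cokernel statement.
-/

section Filtration

variable {R M : Type*} [Ring R] [AddCommGroup M] [Module R M] {f : M →ₗ[R] M}
  {F : ℕ → Submodule R M}

theorem mem_of_mem_add_of_apply_mem_succ (hmono : Monotone F)
    (hqinj : ∀ m, 1 ≤ m → ∀ x ∈ F m, f x ∈ F m → x ∈ F (m - 1))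
    (k : ℕ) {x : M} (hfx : f x ∈ F (k + 1)) : ∀ n, x ∈ F (k + n) → x ∈ F k
  | 0, hx => hx
  | n + 1, hx =>
    mem_of_mem_add_of_apply_mem_succ hmono hqinj k hfx n <| by
      simpa using hqinj (k + n + 1) (by omega) x hx (hmono (by omega) hfx)

theorem filtration_le_sup_range (hmono : Monotone F)
    (hqsurj : ∀ m, 1 ≤ m → ∀ y ∈ F (m + 1), ∃ x ∈ F m, y - f x ∈ F m) (m : ℕ) :
    F m ≤ F 1 ⊔ LinearMap.range f := by
  rcases Nat.lt_or_ge m 1 with hm | hm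
  · exact (hmono (by omega)).trans le_sup_left
  induction m, hm using Nat.le_induction with
  | base => exact le_sup_left
  | succ n hn ih =>
    intro y hy
    obtain ⟨x, -, hyx⟩ := hqsurj n hn y hy
    simpa using Submodule.add_mem _ (ih hyx) (Submodule.mem_sup_right (LinearMap.mem_range_self f x))

end Filtration

theorem stmt_9_general {R M : Type*} [CommRing R] [AddCommGroup M] [Module R M]
    (f : M →ₗ[R] M) (F : ℕ → Submodule R M)
    (hmono : Monotone F)
    (hexh : ∀ z : M, ∃ m, z ∈ F m)
    (hqinj : ∀ m, 1 ≤ m → ∀ x ∈ F m, f x ∈ F m → x ∈ F (m - 1))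
    (hqsurj : ∀ m, 1 ≤ m → ∀ y ∈ F (m + 1), ∃ x ∈ F m, y - f x ∈ F m) :
    ((LinearMap.ker f : Set M) ⊆ (F 0 : Set M)) ∧
    (∀ y ∈ F 1, y ∈ LinearMap.range f → ∃ x ∈ F 0, f x = y) ∧
    (∀ z : M, ∃ y ∈ F 1, ∃ x : M, z = y + f x) := by
  have mem_zero {x : M} (hfx : f x ∈ F 1) : x ∈ F 0 := by
    obtain ⟨m, hm⟩ := hexh x
    exact mem_of_mem_add_of_apply_mem_succ hmono hqinj 0 hfx m (by simpa using hm)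
  refine ⟨fun x hx => mem_zero ?_, fun y hy ⟨x, hxy⟩ => ⟨x, mem_zero (hxy ▸ hy), hxy⟩, fun z => ?_⟩
  · rw [LinearMap.mem_ker.mp hx]
    exact zero_mem _
  · obtain ⟨m, hm⟩ := hexh z
    obtain ⟨y, hy, _, ⟨x, rfl⟩, hz⟩ :=
      Submodule.mem_sup.mp (filtration_le_sup_range hmono hqsurj m hm)
    exact ⟨y, hy, x, hz.symm⟩

/-- Let `f : M → M` be linear, with an exhaustive increasing filtration
`E = F 0 ⊆ F 1 ⊆ ⋯` of `M` such that `f (F m) ⊆ F (m+1)` and such that for all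
`m ≥ 1` the induced map `F m / F (m-1) → F (m+1) / F m` is an isomorphism
(expressed elementwise: injectivity `hqinj` and surjectivity `hqsurj`).
Then the inclusion of two-term complexes `(F 0 → F 1) ↪ (M → M)` is a
quasi-isomorphism: it induces isomorphisms on kernels and cokernels, expressed
elementwise by: `ker f ⊆ F 0`; every element of `F 1` in the image of `f` is
the image of an element of `F 0`; and every element of `M` is, modulo the image
of `f`, an element of `F 1`. -/
theorem stmt_9 {R M : Type*} [CommRing R] [AddCommGroup M] [Module R M]
    (f : M →ₗ[R] M) (F : ℕ → Submodule R M)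
    (hmono : Monotone F)
    (hexh : ∀ z : M, ∃ m, z ∈ F m)
    (hmap : ∀ m, ∀ x ∈ F m, f x ∈ F (m + 1))
    (hqinj : ∀ m, 1 ≤ m → ∀ x ∈ F m, f x ∈ F m → x ∈ F (m - 1))
    (hqsurj : ∀ m, 1 ≤ m → ∀ y ∈ F (m + 1), ∃ x ∈ F m, y - f x ∈ F m) :
    ((LinearMap.ker f : Set M) ⊆ (F 0 : Set M)) ∧
    (∀ y ∈ F 1, y ∈ LinearMap.range f → ∃ x ∈ F 0, f x = y) ∧
    (∀ z : M, ∃ y ∈ F 1, ∃ x : M, z = y + f x) :=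
  stmt_9_general f F hmono hexh hqinj hqsurj
end

section
/- With the hypotheses of the previous Laurent-series lemma, assume additionally that for any two diagonal entries μ_k, μ_m of C lying in the same eigenblock of A, μ_k − μ_m ∈ Z implies μ_k = μ_m. Then N = 0; i.e., any formal gauge transformation preserving the connection form A t^{−2} dt + C t^{−1} dt + O(1) dt is holomorphic at t = 0. Consequently two lattices F_1, F_2 of the same meromorphic connection germ in which the connection has this same normal form coincide. -/
/-!
The leading coefficient `g_N` of the gauge transformation commutes with `A`, so an entry
`(g_N)ᵢⱼ ≠ 0` forces `aᵢ = aⱼ`. On such an entry the commutator with `A` of any matrix vanishes,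
and the next relation reads `N (g_N)ᵢⱼ = (cᵢ - cⱼ) (g_N)ᵢⱼ`. Thus the integer `N` is a difference
of two entries of `C` in one eigenblock of `A`, which the non-resonance hypothesis makes `0`.
-/

open Matrix

section

variable {n α : Type*} [Fintype n] [DecidableEq n] [CommRing α]

theorem Matrix.diagonal_mul_sub_mul_diagonal_apply (d : n → α) (M : Matrix n n α) (i j : n) :
    (diagonal d * M - M * diagonal d) i j = (d i - d j) * M i j := by
  rw [sub_apply, diagonal_mul, mul_diagonal, sub_mul, mul_comm (M i j)]

theorem Matrix.eq_of_diagonal_mul_sub_mul_diagonal_eq_zero [NoZeroDivisors α] {d : n → α}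
    {M : Matrix n n α} (hM : diagonal d * M - M * diagonal d = 0) {i j : n} (hij : M i j ≠ 0) :
    d i = d j := by
  have h := congrFun (congrFun hM i) j
  rw [diagonal_mul_sub_mul_diagonal_apply, zero_apply] at h
  exact sub_eq_zero.mp ((mul_eq_zero.mp h).resolve_right hij)

theorem Matrix.exists_eq_sub_of_smul_eq_diagonal_commutators [NoZeroDivisors α]
    {a c : n → α} {z : α} {M M' : Matrix n n α} (hM0 : M ≠ 0)
    (hMa : diagonal a * M - M * diagonal a = 0)
    (hz : z • M = diagonal a * M' - M' * diagonal a + diagonal c * M - M * diagonal c) :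
    ∃ i j, a i = a j ∧ z = c i - c j := by
  obtain ⟨i, j, hij⟩ : ∃ i j, M i j ≠ 0 := by
    by_contra! h
    exact hM0 (Matrix.ext h)
  have haij := eq_of_diagonal_mul_sub_mul_diagonal_eq_zero hMa hij
  have hzij := congrFun (congrFun hz i) j
  rw [add_sub_assoc, add_apply, diagonal_mul_sub_mul_diagonal_apply,
    diagonal_mul_sub_mul_diagonal_apply, haij, sub_self, zero_mul, zero_add, smul_apply,
    smul_eq_mul] at hzij
  exact ⟨i, j, haij, mul_right_cancel₀ hij hzij⟩

end

/-- Levelt's uniqueness argument.  With the hypotheses of the Laurent-series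
lemma (a formal gauge transformation `g(t) = Σ_{b ≥ N} g_b t^b`, `g_N ≠ 0`,
preserving the connection form `A t⁻² dt + C t⁻¹ dt + O(1) dt` with
`A = diagonal a`, `C = diagonal c`), assume additionally that any two entries
`c i, c j` of `C` in the same eigenblock of `A` which are congruent mod ℤ are
equal.  Then `N = 0`: the gauge transformation is holomorphic at `t = 0`
(whence two lattices in which the connection has this same normal form
coincide). -/
theorem stmt_16 {r : ℕ} (a c : Fin r → ℂ) (N : ℤ)
    (g : ℤ → Matrix (Fin r) (Fin r) ℂ) (h₁ h₂ : ℕ → Matrix (Fin r) (Fin r) ℂ)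
    (hlow : ∀ b : ℤ, b < N → g b = 0) (hgN : g N ≠ 0)
    (heq : ∀ b : ℤ, (b : ℂ) • g b
        = Matrix.diagonal a * g (b + 1) - g (b + 1) * Matrix.diagonal a
          + Matrix.diagonal c * g b - g b * Matrix.diagonal c
          + ∑ k ∈ Finset.range (b - N).toNat,
              (h₁ k * g (b - 1 - k) - g (b - 1 - k) * h₂ k))
    (hC : ∀ i j, a i = a j → (∃ n : ℤ, c i - c j = (n : ℂ)) → c i = c j) :
    N = 0 := by
  -- For `b = N - 1` and `b = N` the sum over lower coefficients is empty.
  have hcomm : diagonal a * g N - g N * diagonal a = 0 := by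
    simpa [hlow (N - 1) (by omega)] using (heq (N - 1)).symm
  have hlead : (N : ℂ) • g N
      = diagonal a * g (N + 1) - g (N + 1) * diagonal a + diagonal c * g N - g N * diagonal c := by
    simpa using heq N
  obtain ⟨i, j, haij, hN⟩ := exists_eq_sub_of_smul_eq_diagonal_commutators hgN hcomm hlead
  have hcij : c i = c j := hC i j haij ⟨N, hN.symm⟩
  exact_mod_cast hN.trans (sub_eq_zero.mpr hcij)
end

section
/- Let f : M → M be a C-linear endomorphism of a C[x]⟨∂_x⟩-module-like filtered object with exhaustive filtration F_0 ⊆ F_1 ⊆ ⋯, M = ⋃ F_m, f(F_m) ⊆ F_{m+1}, and assume all induced maps F_m/F_{m-1} → F_{m+1}/F_m (m ≥ 1) are bijections. Then coker(f : M → M) is isomorphic to coker(f : F_0 → F_1) and in particular, if F_0 and F_1 are finite-dimensional, then coker(f : M → M) is finite-dimensional with dimension dim F_1 − dim F_0 + dim ker(f : F_0 → F_1). -/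
/-!
Every element of `M` is congruent modulo `range f` to an element of `F 1`: the surjectivity of
the graded pieces lets one lower the filtration degree of `y ∈ F (m + 1)` by subtracting some
`f x` with `x ∈ F m`. Dually, injectivity of the graded pieces forces every `z` with
`f z ∈ F 1` into `F 0`. Hence `F 1 → M ⧸ range f` is surjective with kernel `f (F 0)`, and the
dimension formula is rank–nullity for `f : F 0 → F 1`.
-/

open Submodule LinearMap

section Module

variable {R M : Type*} [Ring R] [AddCommGroup M] [Module R M] {f : M →ₗ[R] M}
  {F : ℕ → Submodule R M}

theorem le_sup_range_of_surjective_graded (h01 : F 0 ≤ F 1)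
    (hqsurj : ∀ m, 1 ≤ m → ∀ y ∈ F (m + 1), ∃ x ∈ F m, y - f x ∈ F m) :
    ∀ m, F m ≤ F 1 ⊔ range f
  | 0 => h01.trans le_sup_left
  | 1 => le_sup_left
  | m + 2 => fun y hy => by
    obtain ⟨x, hx, hyx⟩ := hqsurj (m + 1) (Nat.le_add_left 1 m) y hy
    simpa using add_mem (le_sup_range_of_surjective_graded h01 hqsurj (m + 1) hyx)
      (mem_sup_right (mem_range_self f x))

theorem mem_zero_of_injective_graded (hmono : Monotone F)
    (hqinj : ∀ m, 1 ≤ m → ∀ x ∈ F m, f x ∈ F m → x ∈ F (m - 1)) {z : M}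
    (hfz : f z ∈ F 1) : ∀ m, z ∈ F m → z ∈ F 0
  | 0 => id
  | m + 1 => fun hz => mem_zero_of_injective_graded hmono hqinj hfz m <|
    hqinj (m + 1) (Nat.le_add_left 1 m) z hz (hmono (Nat.le_add_left 1 m) hfz)

variable {A B : Submodule R M}

/-- Induced by the inclusion `B → M`. -/
noncomputable def quotRangeRestrictEquivQuotRange (hAB : ∀ x ∈ A, f x ∈ B)
    (hsup : B ⊔ range f = ⊤) (hpre : B.comap f ≤ A) :
    (B ⧸ range (f.restrict hAB)) ≃ₗ[R] (M ⧸ range f) :=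
  let φ : B →ₗ[R] M ⧸ range f := (range f).mkQ ∘ₗ B.subtype
  have hsurj : Function.Surjective φ := by
    rw [← range_eq_top, range_comp, range_subtype, map_mkQ_eq_top, sup_comm, hsup]
  have hker : ker φ = range (f.restrict hAB) := by
    ext ⟨x, hx⟩
    simp only [φ, mem_ker, coe_comp, Function.comp_apply, subtype_apply, mkQ_apply,
      Quotient.mk_eq_zero, mem_range]
    constructor
    · rintro ⟨z, rfl⟩
      exact ⟨⟨z, hpre hx⟩, rfl⟩
    · rintro ⟨z, hz⟩
      exact ⟨z, congrArg Subtype.val hz⟩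
  (quotEquivOfEq _ _ hker.symm).trans (φ.quotKerEquivOfSurjective hsurj)

end Module

theorem finrank_quotient_range_add_finrank {K V W : Type*} [DivisionRing K] [AddCommGroup V]
    [Module K V] [AddCommGroup W] [Module K W] [FiniteDimensional K V] [FiniteDimensional K W]
    (g : V →ₗ[K] W) :
    Module.finrank K (W ⧸ range g) + Module.finrank K V
      = Module.finrank K W + Module.finrank K (ker g) := by
  rw [← g.finrank_range_add_finrank_ker, ← add_assoc,
    (range g).finrank_quotient_add_finrank]

theorem stmt_19_general {M : Type*} [AddCommGroup M] [Module ℂ M]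
    (f : M →ₗ[ℂ] M) (F : ℕ → Submodule ℂ M)
    (hmono : Monotone F)
    (hexh : ∀ z : M, ∃ m, z ∈ F m)
    (h01 : ∀ x ∈ F 0, f x ∈ F 1)
    (hqinj : ∀ m, 1 ≤ m → ∀ x ∈ F m, f x ∈ F m → x ∈ F (m - 1))
    (hqsurj : ∀ m, 1 ≤ m → ∀ y ∈ F (m + 1), ∃ x ∈ F m, y - f x ∈ F m)
    (hfd0 : FiniteDimensional ℂ (F 0)) (hfd1 : FiniteDimensional ℂ (F 1)) :
    Nonempty ((F 1 ⧸ LinearMap.range (f.restrict h01)) ≃ₗ[ℂ]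
        (M ⧸ LinearMap.range f)) ∧
    FiniteDimensional ℂ (M ⧸ LinearMap.range f) ∧
    Module.finrank ℂ (M ⧸ LinearMap.range f) + Module.finrank ℂ (F 0)
      = Module.finrank ℂ (F 1)
        + Module.finrank ℂ (LinearMap.ker (f.restrict h01)) := by
  have hsup : F 1 ⊔ range f = ⊤ := eq_top_iff.2 fun z _ =>
    (hexh z).elim fun m hm => le_sup_range_of_surjective_graded (hmono zero_le_one) hqsurj m hm
  have hpre : (F 1).comap f ≤ F 0 := fun z hfz =>
    (hexh z).elim fun m hm => mem_zero_of_injective_graded hmono hqinj hfz m hm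
  let e := quotRangeRestrictEquivQuotRange h01 hsup hpre
  refine ⟨⟨e⟩, Module.Finite.equiv e, ?_⟩
  rw [← e.finrank_eq]
  exact finrank_quotient_range_add_finrank _

/-- Let `f : M → M` be ℂ-linear with an exhaustive filtration
`F 0 ⊆ F 1 ⊆ ⋯`, `M = ⋃ F m`, `f (F m) ⊆ F (m+1)`, all induced maps
`F m / F (m-1) → F (m+1) / F m` (for `m ≥ 1`) bijections (expressed
elementwise), and `F 0`, `F 1` finite-dimensional.  Then
`coker(f : M → M) ≅ coker(f : F 0 → F 1)`; in particular `coker(f : M → M)` is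
finite-dimensional with `dim coker = dim F 1 - dim F 0 + dim ker(f : F 0 → F 1)`
(stated additively to avoid truncated subtraction). -/
theorem stmt_19 {M : Type*} [AddCommGroup M] [Module ℂ M]
    (f : M →ₗ[ℂ] M) (F : ℕ → Submodule ℂ M)
    (hmono : Monotone F)
    (hexh : ∀ z : M, ∃ m, z ∈ F m)
    (hmap : ∀ m, ∀ x ∈ F m, f x ∈ F (m + 1))
    (h01 : ∀ x ∈ F 0, f x ∈ F 1)
    (hqinj : ∀ m, 1 ≤ m → ∀ x ∈ F m, f x ∈ F m → x ∈ F (m - 1))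
    (hqsurj : ∀ m, 1 ≤ m → ∀ y ∈ F (m + 1), ∃ x ∈ F m, y - f x ∈ F m)
    (hfd0 : FiniteDimensional ℂ (F 0)) (hfd1 : FiniteDimensional ℂ (F 1)) :
    Nonempty ((F 1 ⧸ LinearMap.range (f.restrict h01)) ≃ₗ[ℂ]
        (M ⧸ LinearMap.range f)) ∧
    FiniteDimensional ℂ (M ⧸ LinearMap.range f) ∧
    Module.finrank ℂ (M ⧸ LinearMap.range f) + Module.finrank ℂ (F 0)
      = Module.finrank ℂ (F 1)
        + Module.finrank ℂ (LinearMap.ker (f.restrict h01)) :=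
  stmt_19_general f F hmono hexh h01 hqinj hqsurj hfd0 hfd1
end
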